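/- arXiv:2104.04272 — 2 statements merged into one kernel-verified Lean document; each statement's English description precedes it below -/
import Mathlib

section
/- Every element of order 2 in PGL(2,ℤ) is conjugate to the image of one of the three matrices [[-1,0],[0,1]], [[0,1],[1,0]], or [[0,-1],[1,0]]. -/
/-- `GL(2,ℤ)`. -/
abbrev GL2Z := GL (Fin 2) ℤ

/-- `PGL(2,ℤ)`: the quotient of `GL(2,ℤ)` by its center `{±I}`. -/
abbrev PGL2Z := GL2Z ⧸ Subgroup.center GL2Z

/-- The matrix `[[-1,0],[0,1]]` as an element of `GL(2,ℤ)`. -/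
def Amat : GL2Z := ⟨!![-1, 0; 0, 1], !![-1, 0; 0, 1], by decide, by decide⟩

/-- The matrix `[[0,1],[1,0]]` as an element of `GL(2,ℤ)`. -/
def Bmat : GL2Z := ⟨!![0, 1; 1, 0], !![0, 1; 1, 0], by decide, by decide⟩

/-- The matrix `[[0,-1],[1,0]]` as an element of `GL(2,ℤ)`. -/
def Cmat : GL2Z := ⟨!![0, -1; 1, 0], !![0, 1; -1, 0], by decide, by decide⟩

/-!
A lift `M ∈ GL(2,ℤ)` of an involution satisfies `M² = ±1` without being `±1`, which forces
`tr M = 0`: `M = [[a, b], [c, -a]]` with `a² + bc = ±1`. Conjugating by `T^k = [[1, k], [0, 1]]`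
replaces `a` by `a + kc`, so we may assume `2|a| ≤ |c|`; then `|bc| ≤ 1 + a² ≤ 1 + c²/4` gives
`|b| < |c|` as soon as `|c| ≥ 2`, and conjugating by `S = [[0, -1], [1, 0]]` exchanges `b` and `c`
up to sign. This descent on `|c|` stops at `c = 0` or `|c| = 1`, where one more shear (and, for
`c = 0` and `b` odd, one rotation) reaches `±A`, `±B` or `±C`; the sign is invisible in `PGL(2,ℤ)`.
-/

open Matrix

theorem Matrix.GeneralLinearGroup.trace_eq_zero_of_sq_mem_center {R : Type*} [CommRing R]
    [NoZeroDivisors R] {g : GL (Fin 2) R} (hsq : g ^ 2 ∈ Subgroup.center _)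
    (hg : g ∉ Subgroup.center _) : (g : Matrix (Fin 2) (Fin 2) R).trace = 0 := by
  rw [mem_center_iff_val_mem_range_scalar] at hsq hg
  obtain ⟨r, hr⟩ := hsq
  obtain ⟨a, b, c, d, hM⟩ : ∃ a b c d, (g : Matrix (Fin 2) (Fin 2) R) = !![a, b; c, d] :=
    ⟨_, _, _, _, eta_fin_two _⟩
  rw [hM, trace_fin_two_of]
  by_contra htr
  rw [Units.val_pow_eq_pow_val, hM, sq, mul_fin_two] at hr
  have h00 := congrFun₂ hr 0 0
  have h01 := congrFun₂ hr 0 1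
  have h10 := congrFun₂ hr 1 0
  have h11 := congrFun₂ hr 1 1
  simp only [Fin.isValue, scalar_apply, diagonal_apply_eq, of_apply, cons_val', cons_val_zero,
    cons_val_fin_one, ne_eq, zero_ne_one, not_false_eq_true, diagonal_apply_ne, cons_val_one,
    one_ne_zero] at h00 h01 h10 h11
  have hb : b = 0 :=
    (mul_eq_zero.mp (by linear_combination -h01 : b * (a + d) = 0)).resolve_right htr
  have hc : c = 0 :=
    (mul_eq_zero.mp (by linear_combination -h10 : c * (a + d) = 0)).resolve_right htr
  have hd : a - d = 0 :=
    (mul_eq_zero.mp (by linear_combination h11 - h00 : (a - d) * (a + d) = 0)).resolve_right htr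
  refine hg ⟨a, ?_⟩
  rw [hM, hb, hc, show d = a by linear_combination -hd]
  ext i j; fin_cases i <;> fin_cases j <;> simp

theorem Units.isConj_of_val {M : Type*} [Monoid M] {u v : Mˣ} (h : IsConj (u : M) v) :
    IsConj u v :=
  let ⟨c, hc⟩ := h
  isConj_iff.mpr ⟨c, mul_inv_eq_of_eq_mul (Units.ext hc)⟩

theorem Int.natAbs_lt_of_isUnit_mul_self_add_mul {a b c : ℤ} (h : IsUnit (a * a + b * c))
    (hc : 2 ≤ c.natAbs) (ha : 2 * a.natAbs ≤ c.natAbs) : b.natAbs < c.natAbs := by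
  by_contra! hb
  zify at hc ha hb
  have h1 : |b * c| ≤ 1 + a * a := by
    rcases Int.isUnit_iff.mp h with h | h <;> rw [abs_le] <;> constructor <;> nlinarith
  have h2 : 4 * (a * a) ≤ |c| * |c| := by
    rw [← abs_mul_abs_self a]; nlinarith [abs_nonneg a]
  have h3 : |c| * |c| ≤ |b * c| := by rw [abs_mul]; nlinarith [abs_nonneg c]
  nlinarith

open ModularGroup in
theorem isConj_shear (k a b c : ℤ) :
    IsConj !![a, b; c, -a] !![a + k * c, b - 2 * k * a - k * k * c; c, -(a + k * c)] := by
  refine ⟨SpecialLinearGroup.toGL (T ^ k), ?_⟩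
  simp only [SemiconjBy, SpecialLinearGroup.coe_GL_coe_matrix, coe_T_zpow, mul_fin_two]
  ring_nf

open ModularGroup in
theorem isConj_rotate (a b c : ℤ) : IsConj !![a, b; c, -a] !![-a, -c; -b, a] := by
  refine ⟨SpecialLinearGroup.toGL S, ?_⟩
  simp only [SemiconjBy, SpecialLinearGroup.coe_GL_coe_matrix, coe_S, mul_fin_two]
  ring_nf

def normalForms : Set GL2Z := {Amat, -Amat, Bmat, -Bmat, Cmat, -Cmat}

def HasNormalForm (N : Matrix (Fin 2) (Fin 2) ℤ) : Prop :=
  ∃ u ∈ normalForms, IsConj (u : Matrix (Fin 2) (Fin 2) ℤ) N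

namespace HasNormalForm

theorem of_isConj {N N' : Matrix (Fin 2) (Fin 2) ℤ} (h : HasNormalForm N) (hN : IsConj N N') :
    HasNormalForm N' :=
  let ⟨u, hu, huN⟩ := h
  ⟨u, hu, huN.trans hN⟩

theorem of_mem {u : GL2Z} (hu : u ∈ normalForms) : HasNormalForm u := ⟨u, hu, .refl _⟩

theorem diagonal {a : ℤ} (ha : IsUnit a) : HasNormalForm !![a, 0; 0, -a] := by
  rcases Int.isUnit_iff.mp ha with rfl | rfl
  · convert of_mem (u := -Amat) (by simp [normalForms]) using 1
    ext i j; fin_cases i <;> fin_cases j <;> rfl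
  · exact of_mem (u := Amat) (by simp [normalForms])

theorem antidiagonal {b c : ℤ} (hb : IsUnit b) (hc : IsUnit c) :
    HasNormalForm !![0, b; c, 0] := by
  rcases Int.isUnit_iff.mp hb with rfl | rfl <;> rcases Int.isUnit_iff.mp hc with rfl | rfl
  · exact of_mem (u := Bmat) (by simp [normalForms])
  · convert of_mem (u := -Cmat) (by simp [normalForms]) using 1
    ext i j; fin_cases i <;> fin_cases j <;> rfl
  · exact of_mem (u := Cmat) (by simp [normalForms])
  · convert of_mem (u := -Bmat) (by simp [normalForms]) using 1
    ext i j; fin_cases i <;> fin_cases j <;> rfl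

theorem of_isUnit_lower_left {a b c : ℤ} (hc : IsUnit c) (h : IsUnit (a * a + b * c)) :
    HasNormalForm !![a, b; c, -a] := by
  have hcc : c * c = 1 := Int.isUnit_mul_self hc
  have hshear := isConj_shear (-(a * c)) a b c
  rw [show a + -(a * c) * c = 0 by linear_combination -a * hcc, neg_zero] at hshear
  refine (antidiagonal (isUnit_of_mul_isUnit_left (y := c) ?_) hc).of_isConj hshear.symm
  convert h using 1
  linear_combination (-a ^ 2 * (c * c - 1)) * hcc

theorem of_lower_left_eq_zero {a : ℤ} (b : ℤ) (ha : IsUnit a) :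
    HasNormalForm !![a, b; 0, -a] := by
  have hshear := isConj_shear (a * (b / 2)) a b 0
  rw [mul_zero, add_zero, mul_zero, sub_zero,
    show b - 2 * (a * (b / 2)) * a = b % 2 by
      rw [Int.emod_def]; linear_combination (-2 * (b / 2)) * Int.isUnit_mul_self ha] at hshear
  refine of_isConj ?_ hshear.symm
  rcases Int.emod_two_eq b with hb | hb <;> rw [hb]
  · exact diagonal ha
  · have hrot := isConj_rotate a 1 0
    have hlower := of_isUnit_lower_left (a := -a) (b := 0) (c := -1) (by simp) (by simpa using ha)
    rw [neg_neg] at hlower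
    rw [neg_zero] at hrot
    exact hlower.of_isConj hrot.symm

theorem of_isUnit (a b c : ℤ) (h : IsUnit (a * a + b * c)) : HasNormalForm !![a, b; c, -a] := by
  induction hn : c.natAbs using Nat.strong_induction_on generalizing a b c with
  | _ n ih =>
  obtain rfl | rfl | hc : n = 0 ∨ n = 1 ∨ 2 ≤ n := by omega
  · rw [Int.natAbs_eq_zero.mp hn] at h ⊢
    exact of_lower_left_eq_zero b (isUnit_mul_self_iff.mp (by simpa using h))
  · exact of_isUnit_lower_left (Int.isUnit_iff_natAbs_eq.mpr hn) h
  set k := -(a.bdiv n) * c.sign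
  set a' := a + k * c
  set b' := b - 2 * k * a - k * k * c
  have ha' : a' = a.bmod n := by
    rw [Int.bmod_eq_self_sub_mul_bdiv, ← hn, ← Int.sign_mul_self, hn]
    ring
  have h' : IsUnit (a' * a' + b' * c) := by convert h using 1; ring
  have hb' : b'.natAbs < n := by
    refine hn ▸ Int.natAbs_lt_of_isUnit_mul_self_add_mul h' (hn ▸ hc) ?_
    have := Int.le_bmod (x := a) (m := n) (by omega)
    have := Int.bmod_lt (x := a) (m := n) (by omega)
    omega
  have hrot := ih _ hb' (-a') (-c) (-b') (by convert h' using 1; ring) (Int.natAbs_neg b')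
  rw [neg_neg] at hrot
  exact (hrot.of_isConj (isConj_rotate a' b' c).symm).of_isConj (isConj_shear k a b c).symm

theorem of_trace_eq_zero {N : Matrix (Fin 2) (Fin 2) ℤ} (htr : N.trace = 0)
    (hdet : IsUnit N.det) : HasNormalForm N := by
  obtain ⟨a, b, c, d, rfl⟩ : ∃ a b c d, N = !![a, b; c, d] := ⟨_, _, _, _, eta_fin_two N⟩
  rw [trace_fin_two_of, add_eq_zero_iff_eq_neg'] at htr
  subst htr
  refine of_isUnit a b c ?_
  rw [det_fin_two_of] at hdet
  convert hdet.neg using 1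
  ring

end HasNormalForm

theorem mk_neg_eq_mk (g : GL2Z) : (QuotientGroup.mk (-g) : PGL2Z) = QuotientGroup.mk g := by
  rw [QuotientGroup.eq, GeneralLinearGroup.mem_center_iff_val_mem_range_scalar]
  exact ⟨-1, by simp⟩

/-- Every element of order 2 in `PGL(2,ℤ)` is conjugate to the image of one of the
matrices `[[-1,0],[0,1]]`, `[[0,1],[1,0]]`, `[[0,-1],[1,0]]`. -/
theorem stmt1 (x : PGL2Z) (hx : orderOf x = 2) :
    IsConj (QuotientGroup.mk Amat : PGL2Z) x ∨
      IsConj (QuotientGroup.mk Bmat : PGL2Z) x ∨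
        IsConj (QuotientGroup.mk Cmat : PGL2Z) x := by
  obtain ⟨M, rfl⟩ := QuotientGroup.mk_surjective x
  have hM : M ∉ Subgroup.center GL2Z := by
    rw [← QuotientGroup.eq_one_iff]
    rintro h
    simp [h] at hx
  have hM2 : M ^ 2 ∈ Subgroup.center GL2Z := by
    rw [← QuotientGroup.eq_one_iff, QuotientGroup.mk_pow]
    exact orderOf_dvd_iff_pow_eq_one.mp hx.dvd
  obtain ⟨u, hu, huM⟩ := HasNormalForm.of_trace_eq_zero
    (GeneralLinearGroup.trace_eq_zero_of_sq_mem_center hM2 hM) (isUnits_det_units M)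
  have hconj := (QuotientGroup.mk' (Subgroup.center GL2Z)).map_isConj (Units.isConj_of_val huM)
  simp only [QuotientGroup.mk'_apply] at hconj
  simp only [normalForms, Set.mem_insert_iff, Set.mem_singleton_iff] at hu
  rcases hu with rfl | rfl | rfl | rfl | rfl | rfl <;>
    (try rw [mk_neg_eq_mk] at hconj) <;> tauto
end

section
/- The images of the matrices [[-1,0],[0,1]] and [[0,1],[1,0]] in PGL(2,ℤ) are not conjugate to each other. -/
namespace Matrix.GeneralLinearGroup

variable {n R S : Type*} [Fintype n] [DecidableEq n] [CommRing R] [CommRing S]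

lemma center_eq_bot_of_subsingleton_units [Subsingleton Rˣ] : Subgroup.center (GL n R) = ⊥ := by
  rw [center_eq_range_scalar, MonoidHom.range_eq_bot_iff]
  ext u : 1
  rw [Subsingleton.elim u 1, map_one, MonoidHom.one_apply]

lemma center_le_ker_map_of_subsingleton_units [Subsingleton Sˣ] (f : R →+* S) :
    Subgroup.center (GL n R) ≤ (map (n := n) f).ker := by
  simpa only [center_eq_bot_of_subsingleton_units, MonoidHom.comap_bot] using map_center_le f

end Matrix.GeneralLinearGroup

instance : Subsingleton (ZMod 2)ˣ := ⟨by decide⟩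

open Matrix.GeneralLinearGroup in
def PGL2Z.reduceModTwo : PGL2Z →* GL (Fin 2) (ZMod 2) :=
  QuotientGroup.lift _ (map (Int.castRingHom (ZMod 2)))
    (center_le_ker_map_of_subsingleton_units _)

lemma PGL2Z.reduceModTwo_mk (g : GL2Z) :
    PGL2Z.reduceModTwo g = Matrix.GeneralLinearGroup.map (Int.castRingHom (ZMod 2)) g :=
  rfl

/-- The images of `[[-1,0],[0,1]]` and `[[0,1],[1,0]]` in `PGL(2,ℤ)` are not conjugate. -/
theorem stmt3 :
    ¬ IsConj (QuotientGroup.mk Amat : PGL2Z) (QuotientGroup.mk Bmat : PGL2Z) := by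
  intro h
  have hA : PGL2Z.reduceModTwo Amat = 1 := by rw [PGL2Z.reduceModTwo_mk]; decide
  have hB : PGL2Z.reduceModTwo Bmat ≠ 1 := by rw [PGL2Z.reduceModTwo_mk]; decide
  have := PGL2Z.reduceModTwo.map_isConj h
  rw [hA, isConj_one_right] at this
  exact hB this
end
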